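/- The relation ≺ on binary strings, defined as the transitive closure of the relations s·0·t ≺ s and s ≺ s·1·t' for all strings s, t, t', is a strict total order. -/

import Mathlib

/-!
Irreflexivity: reading `0, 1` as the digits `0, 2` and appending the end marker `1` sends `≺` into
the lexicographic order on lists of naturals, since `s·0·t` and `s·1·t'` differ from `s` first at
the position of the end marker of `s`, by a smaller and a larger digit respectively.
Totality: `0·a ≺ [] ≺ 1·b`, and `≺` is compatible with prepending a common letter.
-/

/-- The base relations: `s·0·t ≺ s` and `s ≺ s·1·t'`. -/
def PrecBase (a b : List Bool) : Prop :=
  (∃ s t, a = s ++ false :: t ∧ b = s) ∨ (∃ s t, b = s ++ true :: t ∧ a = s)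

/-- The order `≺` on binary strings: the transitive closure of `PrecBase`. -/
def Prec : List Bool → List Bool → Prop :=
  Relation.TransGen PrecBase

def lexKey (a : List Bool) : List ℕ :=
  a.map (fun x => 2 * x.toNat) ++ [1]

theorem PrecBase.lexKey_lt {a b : List Bool} (h : PrecBase a b) : lexKey a < lexKey b := by
  apply (List.lt_iff_lex_lt _ _).2
  rcases h with ⟨s, t, rfl, rfl⟩ | ⟨s, t, rfl, rfl⟩
  · simpa [lexKey] using List.Lex.append_left _ (List.Lex.rel (by norm_num : 0 < 1)) (b.map _)
  · simpa [lexKey] using List.Lex.append_left _ (List.Lex.rel (by norm_num : 1 < 2)) (a.map _)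

theorem Prec.lexKey_lt {a b : List Bool} (h : Prec a b) : lexKey a < lexKey b := by
  induction h with
  | single h => exact h.lexKey_lt
  | tail _ h ih => exact ih.trans h.lexKey_lt

theorem PrecBase.cons (x : Bool) {a b : List Bool} (h : PrecBase a b) :
    PrecBase (x :: a) (x :: b) := by
  rcases h with ⟨s, t, rfl, rfl⟩ | ⟨s, t, rfl, rfl⟩
  · exact .inl ⟨x :: b, t, rfl, rfl⟩
  · exact .inr ⟨x :: a, t, rfl, rfl⟩

theorem Prec.cons (x : Bool) {a b : List Bool} (h : Prec a b) : Prec (x :: a) (x :: b) :=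
  h.lift (x :: ·) fun _ _ => PrecBase.cons x

theorem prec_false_cons_nil (a : List Bool) : Prec (false :: a) [] :=
  .single (.inl ⟨[], a, rfl, rfl⟩)

theorem prec_nil_true_cons (a : List Bool) : Prec [] (true :: a) :=
  .single (.inr ⟨[], a, rfl, rfl⟩)

theorem prec_false_cons_true_cons (a b : List Bool) : Prec (false :: a) (true :: b) :=
  (prec_false_cons_nil a).trans (prec_nil_true_cons b)

theorem prec_trichotomous : ∀ a b : List Bool, Prec a b ∨ a = b ∨ Prec b a
  | [], [] => .inr (.inl rfl)
  | [], true :: b => .inl (prec_nil_true_cons b)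
  | [], false :: b => .inr (.inr (prec_false_cons_nil b))
  | true :: a, [] => .inr (.inr (prec_nil_true_cons a))
  | false :: a, [] => .inl (prec_false_cons_nil a)
  | false :: a, true :: b => .inl (prec_false_cons_true_cons a b)
  | true :: a, false :: b => .inr (.inr (prec_false_cons_true_cons b a))
  | false :: a, false :: b =>
    (prec_trichotomous a b).imp (.cons false) (.imp (congrArg _) (.cons false))
  | true :: a, true :: b =>
    (prec_trichotomous a b).imp (.cons true) (.imp (congrArg _) (.cons true))

/-- `≺` is a strict total order on binary strings. -/
theorem stmt13 : IsStrictTotalOrder (List Bool) Prec := by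
  exact
    { trichotomous := fun a b hab hba =>
        ((prec_trichotomous a b).resolve_left hab).resolve_right hba
      irrefl := fun _ h => lt_irrefl _ h.lexKey_lt
      trans := fun _ _ _ => Relation.TransGen.trans }
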